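/- For every x ∈ ℝ, φ(x) + x·Φ(x) > 0, where φ is the standard normal density and Φ the standard normal cumulative distribution function. Equivalently, the second derivative of log Φ, which equals −(x·φ(x)·Φ(x) + φ(x)²)/Φ(x)², is strictly negative for every x. -/
import Mathlib


open Real MeasureTheory

/-- The standard normal density. -/
noncomputable def stdGaussianPDF (x : ℝ) : ℝ :=
  (Real.sqrt (2 * Real.pi))⁻¹ * Real.exp (-x ^ 2 / 2)

/-- The standard normal cumulative distribution function. -/
noncomputable def stdGaussianCDF (x : ℝ) : ℝ :=
  ∫ t in Set.Iic x, stdGaussianPDF t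

lemma stdGaussianPDF_pos (x : ℝ) : 0 < stdGaussianPDF x :=
  mul_pos (inv_pos.mpr (Real.sqrt_pos.mpr (by positivity))) (Real.exp_pos _)

lemma stdGaussianPDF_continuous : Continuous stdGaussianPDF := by
  unfold stdGaussianPDF; fun_prop

lemma stdGaussianPDF_integrable : Integrable stdGaussianPDF := by
  have h := (integrable_exp_neg_mul_sq (by norm_num : (0:ℝ) < 1/2)).const_mul
    (Real.sqrt (2 * Real.pi))⁻¹
  refine h.congr (Filter.Eventually.of_forall fun x => ?_)
  simp only [stdGaussianPDF]
  ring_nf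

lemma stdGaussianPDF_mul_integrable : Integrable (fun t => t * stdGaussianPDF t) := by
  have h := ((integrable_mul_exp_neg_mul_sq (by norm_num : (0:ℝ) < 1/2)).const_mul
    (Real.sqrt (2 * Real.pi))⁻¹)
  refine h.congr (Filter.Eventually.of_forall fun x => ?_)
  simp only [stdGaussianPDF]
  ring_nf

lemma hasDerivAt_stdGaussianPDF (x : ℝ) :
    HasDerivAt stdGaussianPDF (-x * stdGaussianPDF x) x := by
  have h1 : HasDerivAt (fun y : ℝ => -y ^ 2 / 2) (-x) x := by
    have := ((hasDerivAt_pow 2 x).neg).div_const 2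
    simpa using this.congr_deriv (by ring)
  have h2 := (h1.exp).const_mul (Real.sqrt (2 * Real.pi))⁻¹
  exact h2.congr_deriv (by simp [stdGaussianPDF]; ring)

lemma stdGaussianCDF_pos (x : ℝ) : 0 < stdGaussianCDF x := by
  rw [stdGaussianCDF]
  rw [setIntegral_pos_iff_support_of_nonneg_ae
    (Filter.Eventually.of_forall fun t => (stdGaussianPDF_pos t).le)
    stdGaussianPDF_integrable.integrableOn]
  have : Function.support stdGaussianPDF = Set.univ :=
    Set.eq_univ_of_forall fun t => (stdGaussianPDF_pos t).ne'
  rw [this, Set.univ_inter]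
  simp

lemma hasDerivAt_stdGaussianCDF (x : ℝ) :
    HasDerivAt stdGaussianCDF (stdGaussianPDF x) x := by
  have key : stdGaussianCDF = fun y =>
      stdGaussianCDF 0 + ∫ t in (0:ℝ)..y, stdGaussianPDF t := by
    funext y
    have := intervalIntegral.integral_Iic_sub_Iic
      (stdGaussianPDF_integrable.integrableOn (s := Set.Iic 0))
      (stdGaussianPDF_integrable.integrableOn (s := Set.Iic y))
    simp only [stdGaussianCDF]
    linarith [this]
  rw [key]
  exact ((stdGaussianPDF_continuous.integral_hasStrictDerivAt 0 x).hasDerivAt).const_add _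

lemma stdGaussian_tail_integral (x : ℝ) :
    ∫ t in Set.Iic x, t * stdGaussianPDF t = -stdGaussianPDF x := by
  have hderiv : ∀ t ∈ Set.Iic x, HasDerivAt (fun s => -stdGaussianPDF s)
      (t * stdGaussianPDF t) t := fun t _ =>
    ((hasDerivAt_stdGaussianPDF t).neg).congr_deriv (by ring)
  have htend : Filter.Tendsto (fun t => -stdGaussianPDF t) Filter.atBot (nhds 0) := by
    have h1 : Filter.Tendsto (fun t : ℝ => -t ^ 2 / 2) Filter.atBot Filter.atBot := by
      refine Filter.tendsto_atBot_mono' _ ?_ Filter.tendsto_id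
      filter_upwards [Filter.eventually_le_atBot (-2 : ℝ)] with t ht
      simp only [id_eq]
      nlinarith [mul_nonneg (by linarith : (0:ℝ) ≤ -t) (by linarith : (0:ℝ) ≤ -(t + 2))]
    have h2 : Filter.Tendsto (fun t : ℝ => Real.exp (-t ^ 2 / 2)) Filter.atBot (nhds 0) :=
      Real.tendsto_exp_comp_nhds_zero.mpr h1
    have h3 := (h2.const_mul (Real.sqrt (2 * Real.pi))⁻¹).neg
    simp only [mul_zero, neg_zero] at h3
    exact h3.congr fun t => by simp [stdGaussianPDF]
  have := integral_Iic_of_hasDerivAt_of_tendsto' hderiv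
    stdGaussianPDF_mul_integrable.integrableOn htend
  simpa using this

lemma part1 (x : ℝ) : 0 < stdGaussianPDF x + x * stdGaussianCDF x := by
  rcases le_or_gt 0 x with hx | hx
  · exact add_pos_of_pos_of_nonneg (stdGaussianPDF_pos x)
      (mul_nonneg hx (stdGaussianCDF_pos x).le)
  · have hint : IntegrableOn (fun t => (x - t) * stdGaussianPDF t) (Set.Iic x) := by
      have := ((stdGaussianPDF_integrable.const_mul x).sub
        stdGaussianPDF_mul_integrable).integrableOn (s := Set.Iic x)
      exact this.congr_fun (fun t _ => by simp only [Pi.sub_apply]; ring) measurableSet_Iic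
    have key : 0 < ∫ t in Set.Iic x, (x - t) * stdGaussianPDF t := by
      rw [setIntegral_pos_iff_support_of_nonneg_ae ?_ hint]
      · refine lt_of_lt_of_le ?_ (measure_mono (show Set.Iio x ⊆ _ from ?_))
        · simp [Real.volume_Iio]
        · intro t ht
          exact ⟨(mul_pos (by linarith [ht.out] : (0:ℝ) < x - t)
            (stdGaussianPDF_pos t)).ne', Set.mem_Iic.mpr ht.out.le⟩
      · have : ∀ᵐ t ∂(volume.restrict (Set.Iic x)), 0 ≤ (x - t) * stdGaussianPDF t := by
          rw [MeasureTheory.ae_restrict_iff' measurableSet_Iic]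
          exact Filter.Eventually.of_forall fun t ht =>
            mul_nonneg (by linarith [Set.mem_Iic.mp ht]) (stdGaussianPDF_pos t).le
        exact this
    have split : ∫ t in Set.Iic x, (x - t) * stdGaussianPDF t
        = x * stdGaussianCDF x - ∫ t in Set.Iic x, t * stdGaussianPDF t := by
      rw [show (fun t => (x - t) * stdGaussianPDF t)
          = fun t => x * stdGaussianPDF t - t * stdGaussianPDF t from funext fun t => by ring]
      rw [MeasureTheory.integral_sub ((stdGaussianPDF_integrable.const_mul x).integrableOn)
        (stdGaussianPDF_mul_integrable.integrableOn), MeasureTheory.integral_const_mul]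
      rfl
    rw [split, stdGaussian_tail_integral] at key
    linarith

/-- For every `x`, `φ(x) + x·Φ(x) > 0`; equivalently, the second derivative of
`log Φ`, which equals `−(x·φ(x)·Φ(x) + φ(x)²)/Φ(x)²`, is strictly negative. -/
theorem gaussian_log_cdf_strictly_concave :
    (∀ x : ℝ, 0 < stdGaussianPDF x + x * stdGaussianCDF x) ∧
      (∀ x : ℝ,
        deriv (deriv (fun y => Real.log (stdGaussianCDF y))) x
          = -(x * stdGaussianPDF x * stdGaussianCDF x + stdGaussianPDF x ^ 2)
              / stdGaussianCDF x ^ 2) ∧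
      (∀ x : ℝ,
        -(x * stdGaussianPDF x * stdGaussianCDF x + stdGaussianPDF x ^ 2)
            / stdGaussianCDF x ^ 2 < 0) := by
  refine ⟨part1, fun x => ?_, fun x => ?_⟩
  · have dL : deriv (fun y => Real.log (stdGaussianCDF y))
        = fun y => stdGaussianPDF y / stdGaussianCDF y := by
      funext y
      exact (((hasDerivAt_stdGaussianCDF y).log (stdGaussianCDF_pos y).ne')).deriv
    rw [dL]
    have h : HasDerivAt (fun y => stdGaussianPDF y / stdGaussianCDF y)
        ((-x * stdGaussianPDF x * stdGaussianCDF x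
          - stdGaussianPDF x * stdGaussianPDF x) / stdGaussianCDF x ^ 2) x :=
      (hasDerivAt_stdGaussianPDF x).div (hasDerivAt_stdGaussianCDF x)
        (stdGaussianCDF_pos x).ne'
    rw [h.deriv]
    congr 1
    ring
  · apply div_neg_of_neg_of_pos
    · have : 0 < stdGaussianPDF x * (stdGaussianPDF x + x * stdGaussianCDF x) :=
        mul_pos (stdGaussianPDF_pos x) (part1 x)
      nlinarith
    · exact pow_pos (stdGaussianCDF_pos x) 2
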